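/- arXiv:1601.07723 — 2 statements merged into one kernel-verified Lean document; each statement's English description precedes it below -/
import Mathlib

section
/- Let k ≥ 3. Then z_n^(k) = f_{n−1}^(k−1) for all n ≥ 1, and z_0^(k) = 1. -/
/-- A binary string (list of booleans, `false` = 0, `true` = 1) avoids `0^k`
and `1^k`, i.e. it contains neither `k` consecutive 0's nor `k` consecutive 1's. -/
def Avoids (k : ℕ) (s : List Bool) : Prop :=
  ¬ (List.replicate k false <:+: s) ∧ ¬ (List.replicate k true <:+: s)
/-- `zcount k n = z_n^(k)`: the number of binary strings of length `n` ending
with 0 and avoiding `0^k` and `1^k` (the empty string counts, so `zcount k 0 = 1`). -/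
noncomputable def zcount (k n : ℕ) : ℕ :=
  Set.ncard {s : List Bool | s.length = n ∧ Avoids k s ∧ s.getLast? ≠ some true}
/-- The `k`-generalized Fibonacci numbers: `f_n^(k) = 2^n` for `0 ≤ n ≤ k−1`
and `f_n^(k) = f_{n−1}^(k) + … + f_{n−k}^(k)` for `n ≥ k`. -/
def genFib (k : ℕ) (n : ℕ) : ℕ :=
  if n < k then 2 ^ n
  else ∑ j ∈ (Finset.Icc 1 k).attach, genFib k (n - j.1)
termination_by n
decreasing_by
  have hj := j.2
  simp only [Finset.mem_Icc] at hj
  omega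


/-!
Read backwards, `z_n^(k)` counts the strings avoiding `0^k` and `1^k` that do not begin with `1`.
Such a string of length `n ≥ 1` is a run `0^a`, `1 ≤ a ≤ k - 1`, followed by a string of length
`n - a` that does not begin with `0`; complementing every bit, there are `z_{n-a}` of those.
So `z_n = z_{n-1} + ⋯ + z_{n-k+1}` (terms of negative index omitted) with `z_0 = 1`, which is the
recurrence of `f^(k-1)` shifted by one; below `k - 1` it gives `1 + 2^0 + ⋯ + 2^(n-2) = 2^(n-1)`.
-/

open List

namespace List

variable {α : Type*} {x y : α} {k a b : ℕ} {t t' : List α}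

theorem head?_replicate_append_of_ne_zero (ha : a ≠ 0) : (replicate a x ++ t).head? = some x := by
  obtain ⟨a, rfl⟩ := Nat.exists_eq_succ_of_ne_zero ha
  rfl

theorem replicate_infix_replicate_append_of_ne (hxy : x ≠ y) :
    replicate k y <:+: replicate a x ++ t ↔ replicate k y <:+: t := by
  rcases k with _ | k
  · simp
  induction a with
  | zero => simp
  | succ a ih =>
    rw [show replicate (a + 1) x ++ t = x :: (replicate a x ++ t) from rfl, infix_cons_iff, ih]
    simp [replicate_succ, Ne.symm hxy]

theorem replicate_prefix_replicate_append (ht : t.head? ≠ some x)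
    (h : replicate k x <+: replicate a x ++ t) : k ≤ a := by
  by_contra! hak
  obtain ⟨j, rfl⟩ : ∃ j, k = a + (j + 1) := ⟨k - a - 1, by omega⟩
  rw [← replicate_append_replicate, prefix_append_right_inj] at h
  obtain ⟨u, rfl⟩ := h
  exact ht (head?_replicate_append_of_ne_zero j.succ_ne_zero)

theorem replicate_infix_replicate_append (ht : t.head? ≠ some x) :
    replicate k x <:+: replicate a x ++ t ↔ k ≤ a ∨ replicate k x <:+: t := by
  refine ⟨fun h => ?_, ?_⟩
  · induction a with
    | zero => exact .inr (by simpa using h)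
    | succ a ih =>
      rw [replicate_succ, cons_append, infix_cons_iff, ← cons_append, ← replicate_succ] at h
      rcases h with h | h
      · exact .inl (replicate_prefix_replicate_append ht h)
      · exact (ih h).imp_left Nat.le_succ_of_le
  · rintro (h | h)
    · obtain ⟨j, rfl⟩ := Nat.exists_eq_add_of_le h
      rw [← replicate_append_replicate, append_assoc]
      exact (prefix_append _ _).isInfix
    · exact h.trans (suffix_append _ _).isInfix

theorem exists_replicate_append_eq (x : α) (s : List α) :
    ∃ a t, t.head? ≠ some x ∧ replicate a x ++ t = s := by
  induction s with
  | nil => exact ⟨0, [], by simp, rfl⟩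
  | cons y s ih =>
    by_cases hy : y = x
    · obtain ⟨a, t, ht, rfl⟩ := ih
      exact ⟨a + 1, t, ht, by simp [hy, replicate_succ]⟩
    · exact ⟨0, y :: s, by simpa using hy, rfl⟩

theorem eq_of_replicate_append_eq (ht : t.head? ≠ some x) (ht' : t'.head? ≠ some x)
    (h : replicate a x ++ t = replicate b x ++ t') : a = b := by
  wlog hab : a ≤ b generalizing a b t t'
  · exact (this ht' ht h.symm (by omega)).symm
  obtain ⟨j, rfl⟩ := Nat.exists_eq_add_of_le hab
  rw [← replicate_append_replicate, append_assoc, append_cancel_left_eq] at h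
  by_contra hj
  exact ht (h ▸ head?_replicate_append_of_ne_zero (by omega))

end List

theorem genFib_of_lt {k n : ℕ} (h : n < k) : genFib k n = 2 ^ n := by
  rw [genFib, if_pos h]

theorem genFib_of_le {k n : ℕ} (h : k ≤ n) :
    genFib k n = ∑ j ∈ Finset.Icc 1 k, genFib k (n - j) := by
  rw [genFib, if_neg (by omega), Finset.sum_attach _ (fun j => genFib k (n - j))]

theorem avoids_replicate_append_iff {k a : ℕ} {b : Bool} {t : List Bool}
    (ht : t.head? ≠ some b) : Avoids k (replicate a b ++ t) ↔ a < k ∧ Avoids k t := by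
  cases b <;>
  simp only [Avoids, replicate_infix_replicate_append ht,
    replicate_infix_replicate_append_of_ne (show false ≠ true by decide),
    replicate_infix_replicate_append_of_ne (show true ≠ false by decide), not_or, not_le] <;>
  tauto

theorem avoids_map_not {k : ℕ} {s : List Bool} : Avoids k (s.map not) ↔ Avoids k s := by
  have hinfix (b : Bool) : replicate k b <:+: s.map not ↔ replicate k (!b) <:+: s :=
    ⟨fun h => by simpa [Function.comp_def] using h.map not, fun h => by simpa using h.map not⟩
  simp only [Avoids, hinfix, Bool.not_false, Bool.not_true, and_comm]

theorem avoids_reverse {k : ℕ} {s : List Bool} : Avoids k s.reverse ↔ Avoids k s := by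
  have hinfix (b : Bool) : replicate k b <:+: s.reverse ↔ replicate k b <:+: s := by
    rw [← reverse_infix, reverse_replicate, reverse_reverse]
  simp only [Avoids, hinfix]

def avoidersHeadNe (k : ℕ) (c : Bool) (n : ℕ) : Set (List Bool) :=
  {s | s.length = n ∧ Avoids k s ∧ s.head? ≠ some c}

theorem zcount_eq_ncard_avoidersHeadNe (k n : ℕ) :
    zcount k n = (avoidersHeadNe k true n).ncard := by
  have : {s : List Bool | s.length = n ∧ Avoids k s ∧ s.getLast? ≠ some true} =
      reverse ⁻¹' avoidersHeadNe k true n := by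
    ext s
    simp [avoidersHeadNe, avoids_reverse, head?_reverse]
  rw [zcount, this, ← reverse_involutive.image_eq_preimage_symm,
    Set.ncard_image_of_injective _ reverse_injective]

theorem ncard_avoidersHeadNe_not (k : ℕ) (c : Bool) (n : ℕ) :
    (avoidersHeadNe k (!c) n).ncard = (avoidersHeadNe k c n).ncard := by
  have hinv := Bool.involutive_not.list_map
  have : avoidersHeadNe k (!c) n = map not ⁻¹' avoidersHeadNe k c n := by
    ext s
    simp [avoidersHeadNe, avoids_map_not]
  rw [this, ← hinv.image_eq_preimage_symm, Set.ncard_image_of_injective _ hinv.injective]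

theorem avoidersHeadNe_zero {k : ℕ} (hk : k ≠ 0) (c : Bool) : avoidersHeadNe k c 0 = {[]} := by
  ext s
  simp only [avoidersHeadNe, Set.mem_ofPred_eq, Set.mem_singleton_iff, length_eq_zero_iff]
  refine ⟨And.left, ?_⟩
  rintro rfl
  simp [Avoids, hk]

theorem avoidersHeadNe_eq_biUnion {k n : ℕ} (hn : n ≠ 0) (c : Bool) :
    avoidersHeadNe k c n = ⋃ a ∈ Finset.Icc 1 (min (k - 1) n),
      (replicate a (!c) ++ ·) '' avoidersHeadNe k (!c) (n - a) := by
  ext s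
  simp only [avoidersHeadNe, Set.mem_ofPred_eq, Set.mem_iUnion, Set.mem_image, Finset.mem_Icc,
    exists_prop]
  constructor
  · rintro ⟨hlen, hs, hhead⟩
    obtain ⟨a, t, ht, rfl⟩ := exists_replicate_append_eq (!c) s
    have ha : a ≠ 0 := by
      rintro rfl
      cases t with
      | nil => exact hn hlen.symm
      | cons x t => cases x <;> cases c <;> simp_all
    rw [avoids_replicate_append_iff ht] at hs
    simp only [length_append, length_replicate] at hlen
    exact ⟨a, by omega, t, ⟨by omega, hs.2, ht⟩, rfl⟩
  · rintro ⟨a, ha, t, ⟨hlen, ht, hhead⟩, rfl⟩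
    refine ⟨by simp only [length_append, length_replicate]; omega,
      (avoids_replicate_append_iff hhead).2 ⟨by omega, ht⟩, ?_⟩
    rw [head?_replicate_append_of_ne_zero (by omega)]
    simp

theorem ncard_avoidersHeadNe {k n : ℕ} (hn : n ≠ 0) (c : Bool) :
    (avoidersHeadNe k c n).ncard =
      ∑ a ∈ Finset.Icc 1 (min (k - 1) n), (avoidersHeadNe k c (n - a)).ncard := by
  have hfin (m : ℕ) : (avoidersHeadNe k (!c) m).Finite :=
    (List.finite_length_eq Bool m).subset fun s hs => hs.1
  rw [avoidersHeadNe_eq_biUnion hn, ← Finset.set_biUnion_coe, Set.Finite.ncard_biUnion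
    (Finset.finite_toSet _) (fun a _ => (hfin _).image _), finsum_mem_coe_finset]
  · refine Finset.sum_congr rfl fun a _ => ?_
    rw [Set.ncard_image_of_injective _ (append_right_injective _), ncard_avoidersHeadNe_not]
  · intro a _ b _ hab
    refine Set.disjoint_left.2 ?_
    rintro _ ⟨t, ht, rfl⟩ ⟨t', ht', h⟩
    exact hab (eq_of_replicate_append_eq ht'.2.2 ht.2.2 h).symm

theorem eq_genFib_of_sum_Icc {m : ℕ} {z : ℕ → ℕ} (h0 : z 0 = 1)
    (hz : ∀ n, n ≠ 0 → z n = ∑ a ∈ Finset.Icc 1 (min m n), z (n - a)) (n : ℕ) :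
    z (n + 1) = genFib m n := by
  induction n using Nat.strong_induction_on with
  | _ n ih =>
    rw [hz (n + 1) n.succ_ne_zero]
    rcases lt_or_ge n m with hnm | hmn
    · have hsum :
          ∑ a ∈ Finset.Icc 1 (n + 1), z (n + 1 - a) = ∑ i ∈ Finset.range (n + 1), z i := by
        rw [← Finset.Ico_add_one_right_eq_Icc, Finset.sum_Ico_reflect _ _ le_rfl, Nat.sub_self,
          Nat.Ico_zero_eq_range, Nat.add_sub_cancel]
      have hpow : ∑ i ∈ Finset.range n, 2 ^ i + 1 = 2 ^ n := by
        simpa using geom_sum_mul_add (1 : ℕ) n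
      rw [min_eq_right hnm, hsum, Finset.sum_range_succ', h0, genFib_of_lt hnm, ← hpow]
      congr 1
      refine Finset.sum_congr rfl fun i hi => ?_
      rw [Finset.mem_range] at hi
      rw [ih i hi, genFib_of_lt (by omega)]
    · rw [min_eq_left (by omega), genFib_of_le hmn]
      refine Finset.sum_congr rfl fun a ha => ?_
      rw [Finset.mem_Icc] at ha
      rw [show n + 1 - a = n - a + 1 by omega, ih _ (by omega)]

/-- `z_0^(k) = 1` and `z_n^(k) = f_{n−1}^(k−1)` for all `n ≥ 1`. -/
theorem zcount_eq_genFib (k : ℕ) (hk : 3 ≤ k) :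
    zcount k 0 = 1 ∧ ∀ n : ℕ, 1 ≤ n → zcount k n = genFib (k - 1) (n - 1) := by
  simp only [zcount_eq_ncard_avoidersHeadNe]
  have h0 : (avoidersHeadNe k true 0).ncard = 1 := by
    rw [avoidersHeadNe_zero (by omega), Set.ncard_singleton]
  refine ⟨h0, fun n hn => ?_⟩
  obtain ⟨n, rfl⟩ := Nat.exists_eq_add_of_le' hn
  exact eq_genFib_of_sum_Icc h0 (fun n hn => ncard_avoidersHeadNe hn true) n
end

section
/- Let 3 ≤ k ≤ ⌊n/2⌋, n ≥ 2k and 2 ≤ m < m'. Then the set S^(k)_{m×n} ∪ S^(k)_{m'×n} (of matrices of the two different sizes) is not non-overlapping: for every matrix A ∈ S^(k)_{m×n} there exists a matrix B ∈ S^(k)_{m'×n} whose bottom m rows coincide with A, so that A can be completely overlapped on B. -/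
/-- The `i`-th row (0-indexed) of an `m × n` binary matrix, read as a binary string. -/
def row {m n : ℕ} (A : Fin m → Fin n → Bool) (i : ℕ) : List Bool :=
  List.ofFn (fun j : Fin n => if h : i < m then A ⟨i, h⟩ j else false)
/-- The set `S^(k)_{m×n}`: binary `m × n` matrices whose first row is
`1^{k−1} 0 w 1 0^{k−1}` (with `0w1` of length `n−2k+2` avoiding `0^k` and `1^k`),
whose middle rows end with `0` and avoid `0^k` and `1^k`, and whose last row is
`1^k v 0^k` (with `v` of length `n−2k` avoiding `0^k` and `1^k`). -/
def SkSet (m n k : ℕ) : Set (Fin m → Fin n → Bool) :=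
  {A |
    (∃ v : List Bool, v.length = n - 2*k + 2 ∧ Avoids k v ∧
        v.head? = some false ∧ v.getLast? = some true ∧
        row A 0 = List.replicate (k-1) true ++ v ++ List.replicate (k-1) false) ∧
    (∀ i : ℕ, 1 ≤ i → i ≤ m - 2 → Avoids k (row A i) ∧ (row A i).getLast? = some false) ∧
    (∃ v : List Bool, v.length = n - 2*k ∧ Avoids k v ∧
        row A (m-1) = List.replicate k true ++ v ++ List.replicate k false)}

/-!
Stack `m' - m` new rows on top of `A`: a first row `1^{k-1} 0 w 1 0^{k-1}` with `0w1` built from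
an alternating word, then alternating words ending in `0`. The old first row of `A` becomes a
middle row: it ends in `0`, and it has no run of length `k` because its three blocks `1^{k-1}`,
`0w1`, `0^{k-1}` meet at `1 | 0` junctions, across which no run can pass.
-/

open List

theorem avoids_iff {k : ℕ} {s : List Bool} : Avoids k s ↔ ∀ b, ¬ replicate k b <:+: s := by
  rw [Bool.forall_bool, Avoids]

theorem avoids_replicate {j k : ℕ} (hjk : j < k) (b : Bool) : Avoids k (replicate j b) := by
  rw [avoids_iff]
  intro c h
  have := (infix_replicate_iff.1 h).1
  simp only [length_replicate] at this
  omega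

theorem Avoids.cons {k : ℕ} {t : List Bool} (h : Avoids k t) (a : Bool) :
    Avoids (k + 1) (a :: t) := by
  rw [avoids_iff] at *
  intro b hb
  rcases infix_cons_iff.1 hb with hb | hb
  · rw [replicate_succ, cons_prefix_cons] at hb
    exact h b hb.2.isInfix
  · exact h b ((infix_replicate_iff.2 ⟨by simp, by simp⟩).trans hb)

theorem Avoids.append {k : ℕ} {s t : List Bool} (hs : Avoids k s) (ht : Avoids k t)
    (hst : ∀ a ∈ s.getLast?, ∀ b ∈ t.head?, a ≠ b) : Avoids k (s ++ t) := by
  rw [avoids_iff] at *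
  intro b h
  obtain h | h | ⟨l₁, l₂, hl, ⟨s', rfl⟩, ⟨t', rfl⟩⟩ := infix_append_iff.1 h
  · exact hs b h
  · exact ht b h
  obtain ⟨-, hl₁, hl₂⟩ := append_eq_replicate_iff.1 hl.symm
  rcases eq_or_ne l₁ [] with rfl | hl₁0
  · exact ht b ⟨[], t', by simp [hl]⟩
  rcases eq_or_ne l₂ [] with rfl | hl₂0
  · exact hs b ⟨s', [], by simp [hl]⟩
  refine hst b ?_ b ?_ rfl
  · rw [hl₁]
    simp [getLast?_replicate, hl₁0]
  · rw [hl₂]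
    simp [head?_replicate, hl₂0]

theorem List.IsChain.avoids {k : ℕ} {s : List Bool} (h : s.IsChain (· ≠ ·)) (hk : 2 ≤ k) :
    Avoids k s := by
  rw [avoids_iff]
  intro b hb
  have : [b, b] <:+: s := (infix_replicate_iff.2 ⟨by simpa using hk, rfl⟩).trans hb
  simpa using h.infix this

theorem isChain_iterate_not (b : Bool) (n : ℕ) : (iterate not b n).IsChain (· ≠ ·) := by
  induction n generalizing b with
  | zero => simp
  | succ n ih =>
    rw [iterate, isChain_cons]
    refine ⟨?_, ih _⟩
    cases n <;> simp [iterate]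

def IsFirstRow (k n : ℕ) (r : List Bool) : Prop :=
  ∃ v : List Bool, v.length = n - 2*k + 2 ∧ Avoids k v ∧
    v.head? = some false ∧ v.getLast? = some true ∧
    r = replicate (k-1) true ++ v ++ replicate (k-1) false

def IsMiddleRow (k : ℕ) (r : List Bool) : Prop :=
  Avoids k r ∧ r.getLast? = some false

def IsLastRow (k n : ℕ) (r : List Bool) : Prop :=
  ∃ v : List Bool, v.length = n - 2*k ∧ Avoids k v ∧
    r = replicate k true ++ v ++ replicate k false

theorem mem_SkSet_iff {m n k : ℕ} {A : Fin m → Fin n → Bool} :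
    A ∈ SkSet m n k ↔ IsFirstRow k n (row A 0) ∧
      (∀ i, 1 ≤ i → i ≤ m - 2 → IsMiddleRow k (row A i)) ∧ IsLastRow k n (row A (m - 1)) :=
  Iff.rfl

theorem IsFirstRow.isMiddleRow {k n : ℕ} {r : List Bool} (h : IsFirstRow k n r) (hk : 2 ≤ k) :
    IsMiddleRow k r := by
  obtain ⟨v, -, hv, hv0, hv1, rfl⟩ := h
  refine ⟨((avoids_replicate (by omega) true).append hv ?_).append
    (avoids_replicate (by omega) false) ?_, ?_⟩
  · simp [getLast?_replicate, hv0]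
  · simp [getLast?_append, head?_replicate, hv1]
  · simp only [getLast?_append, getLast?_replicate]
    simp [show k - 1 ≠ 0 by omega]

/-- The middle word is `0` followed by an alternating word ending in `1`; for odd length it
starts with `00`, hence `3 ≤ k`. -/
theorem exists_isFirstRow {k n : ℕ} (hk : 3 ≤ k) (hn : 2 * k ≤ n) :
    ∃ r, r.length = n ∧ IsFirstRow k n r := by
  obtain ⟨p, hp⟩ : ∃ p, n - 2 * k + 2 = p + 2 := ⟨_, rfl⟩
  set v := false :: (iterate not true (p + 1)).reverse
  have hv : Avoids k v := by
    have := (avoids_reverse.2 ((isChain_iterate_not true (p + 1)).avoids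
      (k := k - 1) (by omega))).cons false
    rwa [Nat.sub_add_cancel (by omega)] at this
  refine ⟨replicate (k-1) true ++ v ++ replicate (k-1) false, ?_, v, ?_, hv, rfl, ?_, rfl⟩
  · simp [v]
    omega
  · simp [v, hp]
  · simp [v, iterate, getLast?_cons]

theorem exists_isMiddleRow {k n : ℕ} (hk : 2 ≤ k) (hn : 0 < n) :
    ∃ r, r.length = n ∧ IsMiddleRow k r := by
  obtain ⟨p, rfl⟩ : ∃ p, n = p + 1 := ⟨n - 1, by omega⟩
  exact ⟨(iterate not false (p + 1)).reverse, by simp,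
    avoids_reverse.2 ((isChain_iterate_not false _).avoids hk), by simp [iterate]⟩

@[simp]
theorem length_row {m n : ℕ} (A : Fin m → Fin n → Bool) (i : ℕ) : (row A i).length = n := by
  simp [row]

theorem exists_row_eq (m n : ℕ) (R : ℕ → List Bool) (hR : ∀ i, (R i).length = n) :
    ∃ B : Fin m → Fin n → Bool, ∀ i < m, row B i = R i := by
  refine ⟨fun i j => (R i)[(j : ℕ)]'(by simp [hR]), fun i hi => ?_⟩
  apply ext_getElem <;> simp [row, hR, hi]

theorem SkSet_extend_rows_general (m m' n k : ℕ) (hk : 3 ≤ k)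
    (hn : 2 * k ≤ n) (hm : 2 ≤ m) (hmm' : m < m') :
    ∀ A ∈ SkSet m n k, ∃ B ∈ SkSet m' n k,
      ∀ i : ℕ, i < m → row B (m' - m + i) = row A i := by
  intro A hA
  obtain ⟨hfirst, hmiddle, hlast⟩ := mem_SkSet_iff.1 hA
  obtain ⟨top, htop_len, htop⟩ := exists_isFirstRow hk hn
  obtain ⟨alt, halt_len, halt⟩ := exists_isMiddleRow (by omega : 2 ≤ k) (by omega : 0 < n)
  set d := m' - m
  obtain ⟨B, hB⟩ := exists_row_eq m' n
    (fun i => if i = 0 then top else if i < d then alt else row A (i - d))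
    (fun i => by split_ifs <;> simp [*])
  have hBA : ∀ i < m, row B (d + i) = row A i := fun i hi => by
    rw [hB _ (by omega), if_neg (by omega), if_neg (by omega), Nat.add_sub_cancel_left]
  refine ⟨B, mem_SkSet_iff.2 ⟨?_, fun i hi₁ hi₂ => ?_, ?_⟩, hBA⟩
  · simpa [hB 0 (by omega)] using htop
  · obtain hi | rfl | hi := lt_trichotomy i d
    · simpa [hB i (by omega), show i ≠ 0 by omega, hi] using halt
    · rw [← add_zero d, hBA 0 (by omega)]
      exact hfirst.isMiddleRow (by omega)
    · obtain ⟨j, rfl⟩ := Nat.exists_eq_add_of_lt hi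
      rw [add_assoc, hBA _ (by omega)]
      exact hmiddle _ (by omega) (by omega)
  · rw [show m' - 1 = d + (m - 1) by omega, hBA _ (by omega)]
    exact hlast

/-- For `m < m'`, the set `S^(k)_{m×n} ∪ S^(k)_{m'×n}` is not non-overlapping:
every `A ∈ S^(k)_{m×n}` can be completely overlapped on some `B ∈ S^(k)_{m'×n}`,
the bottom `m` rows of `B` coinciding with the rows of `A`. -/
theorem SkSet_extend_rows (m m' n k : ℕ) (hk : 3 ≤ k) (hkn : k ≤ n / 2)
    (hn : 2 * k ≤ n) (hm : 2 ≤ m) (hmm' : m < m') :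
    ∀ A ∈ SkSet m n k, ∃ B ∈ SkSet m' n k,
      ∀ i : ℕ, i < m → row B (m' - m + i) = row A i :=
  SkSet_extend_rows_general m m' n k hk hn hm hmm'
end
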